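/- Let Φ = log P where P(z, z̄) = 1 + Σ_{j=1}^n |z_j|² + Σ_{j=n+1}^N a_j |z^{m_j}|² with all a_j > 0. If the associated metric g_{αβ̄} = ∂²Φ/∂z_α∂z̄_β satisfies det(g_{αβ̄}) = e^{−(λ/2)Φ}, i.e. det(g_{αβ̄}) · P^{λ/2} ≡ 1, with λ/2 an integer, then λ > 0. -/

import Mathlib

/-!
With `Φ = log P` and `P(z, z̄)` a polynomial, `g_{αβ̄} = (P ∂_α∂̄_β P - ∂̄_β P ∂_α P) / P²`.
Along the diagonal `z = (t, …, t)` we have `P ≥ c t^{2M}` with `2M ≥ deg P`, while the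
numerator has degree at most `4M - 2`; so every entry of `g` is `O(t⁻²)` and `det g → 0`.
If `λ ≤ 0`, then `P ≥ 1` gives `|det g| = P^{-λ/2} ≥ 1`, a contradiction.
-/

open scoped BigOperators

/-- Wirtinger derivative `∂f/∂z_α`. -/
noncomputable def wD {n : ℕ} (f : (Fin n → ℂ) → ℂ) (α : Fin n) (z : Fin n → ℂ) : ℂ :=
  (fderiv ℝ f z (Pi.single α 1) - Complex.I * fderiv ℝ f z (Pi.single α Complex.I)) / 2

/-- Conjugate Wirtinger derivative `∂f/∂z̄_α`. -/
noncomputable def wDbar {n : ℕ} (f : (Fin n → ℂ) → ℂ) (α : Fin n) (z : Fin n → ℂ) : ℂ :=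
  (fderiv ℝ f z (Pi.single α 1) + Complex.I * fderiv ℝ f z (Pi.single α Complex.I)) / 2

/-- The matrix `g_{αβ̄} = ∂²Φ/∂z_α ∂z̄_β` of a Kähler metric with potential `Φ`. -/
noncomputable def kahlerMatrix {n : ℕ} (Φ : (Fin n → ℂ) → ℝ) (z : Fin n → ℂ) :
    Matrix (Fin n) (Fin n) ℂ :=
  fun α β => wD (fun w => wDbar (fun v => (Φ v : ℂ)) β w) α z


open MvPolynomial Complex Filter Topology

section Degree

variable {σ R : Type*}

theorem totalDegree_pderiv_le [CommSemiring R] (i : σ) (p : MvPolynomial σ R) :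
    (pderiv i p).totalDegree ≤ p.totalDegree - 1 := by
  classical
  refine Finset.sup_le fun d hd => ?_
  have hmem : d + Finsupp.single i 1 ∈ p.support := by
    rw [mem_support_iff, coeff_pderiv] at hd
    exact mem_support_iff.mpr (left_ne_zero_of_mul hd)
  have h := le_totalDegree hmem
  change Finsupp.degree (d + Finsupp.single i 1) ≤ _ at h
  rw [map_add, Finsupp.degree_single] at h
  change Finsupp.degree d ≤ _
  omega

theorem norm_eval_le_mul_pow [Fintype σ] [NormedCommRing R] [NormOneClass R]
    (p : MvPolynomial σ R) {x : σ → R} {t : ℝ} (ht : 1 ≤ t) (hx : ∀ i, ‖x i‖ ≤ t) :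
    ‖eval x p‖ ≤ (∑ d ∈ p.support, ‖coeff d p‖) * t ^ p.totalDegree := by
  rw [eval_eq', Finset.sum_mul]
  refine (norm_sum_le _ _).trans (Finset.sum_le_sum fun d hd => ?_)
  have hmono : ∏ i, ‖x i‖ ^ d i ≤ t ^ p.totalDegree := calc
    ∏ i, ‖x i‖ ^ d i ≤ ∏ i, t ^ d i := Finset.prod_le_prod (fun i _ => by positivity)
        fun i _ => pow_le_pow_left₀ (norm_nonneg _) (hx i) _
    _ = t ^ Finsupp.degree d := by rw [Finset.prod_pow_eq_pow_sum, Finsupp.degree_eq_sum]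
    _ ≤ t ^ p.totalDegree := pow_le_pow_right₀ ht (le_totalDegree hd)
  calc ‖coeff d p * ∏ i, x i ^ d i‖ ≤ ‖coeff d p‖ * ∏ i, ‖x i‖ ^ d i := by
        refine (norm_mul_le _ _).trans (mul_le_mul_of_nonneg_left ?_ (norm_nonneg _))
        exact (Finset.norm_prod_le _ _).trans
          (Finset.prod_le_prod (fun i _ => norm_nonneg _) fun i _ => norm_pow_le _ _)
    _ ≤ ‖coeff d p‖ * t ^ p.totalDegree := mul_le_mul_of_nonneg_left hmono (norm_nonneg _)

end Degree

theorem Matrix.tendsto_det_zero {ι R X : Type*} [Fintype ι] [DecidableEq ι] [Nonempty ι]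
    [CommRing R] [TopologicalSpace R] [IsTopologicalRing R] {l : Filter X}
    {A : X → Matrix ι ι R} (hA : ∀ i j, Tendsto (fun x => A x i j) l (𝓝 0)) :
    Tendsto (fun x => (A x).det) l (𝓝 0) := by
  have h := (continuous_id.matrix_det (n := ι) (R := R)).tendsto 0
  rw [id, Matrix.det_zero] at h
  exact h.comp (tendsto_pi_nhds.2 fun i => tendsto_pi_nhds.2 (hA i))

section Wirtinger

variable {n : ℕ}

theorem wD_comp {f : (Fin n → ℂ) → ℂ} {h : ℂ → ℂ} {h' : ℂ} {z : Fin n → ℂ}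
    (hh : HasDerivAt h h' (f z)) (hf : DifferentiableAt ℝ f z) (α : Fin n) :
    wD (h ∘ f) α z = h' * wD f α z := by
  simp only [wD, (hh.comp_hasFDerivAt z hf.hasFDerivAt).fderiv, smul_apply, smul_eq_mul]
  ring

theorem wDbar_comp {f : (Fin n → ℂ) → ℂ} {h : ℂ → ℂ} {h' : ℂ} {z : Fin n → ℂ}
    (hh : HasDerivAt h h' (f z)) (hf : DifferentiableAt ℝ f z) (α : Fin n) :
    wDbar (h ∘ f) α z = h' * wDbar f α z := by
  simp only [wDbar, (hh.comp_hasFDerivAt z hf.hasFDerivAt).fderiv, smul_apply, smul_eq_mul]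
  ring

theorem wD_mul {f g : (Fin n → ℂ) → ℂ} {z : Fin n → ℂ} (hf : DifferentiableAt ℝ f z)
    (hg : DifferentiableAt ℝ g z) (α : Fin n) :
    wD (fun w => f w * g w) α z = f z * wD g α z + g z * wD f α z := by
  simp only [wD, fderiv_fun_mul hf hg, add_apply, smul_apply, smul_eq_mul]
  ring

/-- The variables `Sum.inl i` and `Sum.inr i` stand for `z_i` and `z̄_i`, so that
`evalConj p` is the function `z ↦ p(z, z̄)`. -/
noncomputable def conjCoord : Fin n ⊕ Fin n → (Fin n → ℂ) →L[ℝ] ℂ :=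
  Sum.elim (fun i => ContinuousLinearMap.proj (R := ℝ) (φ := fun _ => ℂ) i)
    (fun i => conjCLE.toContinuousLinearMap ∘L
      ContinuousLinearMap.proj (R := ℝ) (φ := fun _ => ℂ) i)

noncomputable def evalConj (p : MvPolynomial (Fin n ⊕ Fin n) ℂ) (z : Fin n → ℂ) : ℂ :=
  eval (fun s => conjCoord s z) p

theorem hasFDerivAt_evalConj (p : MvPolynomial (Fin n ⊕ Fin n) ℂ) (z : Fin n → ℂ) :
    HasFDerivAt (evalConj p) (∑ s, evalConj (pderiv s p) z • conjCoord s) z := by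
  classical
  induction p using MvPolynomial.induction_on with
  | C a =>
    rw [show evalConj (C a) = fun _ => a from funext fun w => eval_C a]
    refine (hasFDerivAt_const a z).congr_fderiv ?_
    ext v; simp [evalConj]
  | add p q hp hq =>
    rw [show evalConj (p + q) = fun w => evalConj p w + evalConj q w from
      funext fun w => map_add _ p q]
    refine (hp.add hq).congr_fderiv ?_
    ext v; simp [evalConj, add_mul, Finset.sum_add_distrib, -Fintype.sum_sum_type]
  | mul_X p s hp =>
    rw [show evalConj (p * X s) = fun w => evalConj p w * conjCoord s w from
      funext fun w => by simp [evalConj]]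
    refine (hp.mul (conjCoord s).hasFDerivAt).congr_fderiv ?_
    ext v
    simp [evalConj, pderiv_X, Pi.single_apply, add_mul, Finset.sum_add_distrib, Finset.mul_sum,
      apply_ite, ite_mul, -Fintype.sum_sum_type, mul_assoc]

theorem differentiableAt_evalConj (p : MvPolynomial (Fin n ⊕ Fin n) ℂ) (z : Fin n → ℂ) :
    DifferentiableAt ℝ (evalConj p) z :=
  (hasFDerivAt_evalConj p z).differentiableAt

theorem wD_evalConj (p : MvPolynomial (Fin n ⊕ Fin n) ℂ) (α : Fin n) (z : Fin n → ℂ) :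
    wD (evalConj p) α z = evalConj (pderiv (Sum.inl α) p) z := by
  simp [wD, (hasFDerivAt_evalConj p z).fderiv, conjCoord, Pi.single_apply, apply_ite]
  linear_combination (evalConj (pderiv (Sum.inr α) p) z - evalConj (pderiv (Sum.inl α) p) z) / 2 *
    I_mul_I

theorem wDbar_evalConj (p : MvPolynomial (Fin n ⊕ Fin n) ℂ) (α : Fin n) (z : Fin n → ℂ) :
    wDbar (evalConj p) α z = evalConj (pderiv (Sum.inr α) p) z := by
  simp [wDbar, (hasFDerivAt_evalConj p z).fderiv, conjCoord, Pi.single_apply, apply_ite]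
  linear_combination (evalConj (pderiv (Sum.inl α) p) z - evalConj (pderiv (Sum.inr α) p) z) / 2 *
    I_mul_I

noncomputable def kahlerNumerator (p : MvPolynomial (Fin n ⊕ Fin n) ℂ) (α β : Fin n) :
    MvPolynomial (Fin n ⊕ Fin n) ℂ :=
  p * pderiv (Sum.inl α) (pderiv (Sum.inr β) p) - pderiv (Sum.inr β) p * pderiv (Sum.inl α) p

theorem totalDegree_kahlerNumerator_le {k : ℕ} {p : MvPolynomial (Fin n ⊕ Fin n) ℂ}
    (hp : p.totalDegree ≤ k + 2) (α β : Fin n) :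
    (kahlerNumerator p α β).totalDegree ≤ 2 * (k + 1) := by
  have h₁ := totalDegree_pderiv_le (Sum.inl α) p
  have h₂ := totalDegree_pderiv_le (Sum.inr β) p
  have h₃ := totalDegree_pderiv_le (Sum.inl α) (pderiv (Sum.inr β) p)
  refine (totalDegree_sub _ _).trans (max_le ?_ ?_)
  · exact (totalDegree_mul _ _).trans (by omega)
  · exact (totalDegree_mul _ _).trans (by omega)

theorem kahlerMatrix_apply_of_eq_log {Φ : (Fin n → ℂ) → ℝ} {p : MvPolynomial (Fin n ⊕ Fin n) ℂ}
    (hp : ∀ w, evalConj p w ∈ slitPlane) (hΦ : ∀ w, (Φ w : ℂ) = log (evalConj p w))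
    (z : Fin n → ℂ) (α β : Fin n) :
    kahlerMatrix Φ z α β = evalConj (kahlerNumerator p α β) z / evalConj p z ^ 2 := by
  have hp0 : evalConj p z ≠ 0 := slitPlane_ne_zero (hp z)
  have hinv : HasDerivAt Inv.inv (-(evalConj p z ^ 2)⁻¹) (evalConj p z) := hasDerivAt_inv hp0
  have hdbar : (fun w => wDbar (fun v => (Φ v : ℂ)) β w) =
      fun w => (evalConj p w)⁻¹ * evalConj (pderiv (Sum.inr β) p) w := by
    ext w
    rw [show (fun v => (Φ v : ℂ)) = log ∘ evalConj p from funext hΦ,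
      wDbar_comp (hasDerivAt_log (hp w)) (differentiableAt_evalConj p w), wDbar_evalConj]
  rw [kahlerMatrix, hdbar,
    wD_mul (f := fun w => (evalConj p w)⁻¹)
      (hinv.comp_hasFDerivAt z (hasFDerivAt_evalConj p z)).differentiableAt
      (differentiableAt_evalConj _ z),
    show (fun w => (evalConj p w)⁻¹) = Inv.inv ∘ evalConj p from rfl,
    wD_comp hinv (differentiableAt_evalConj p z), wD_evalConj, wD_evalConj]
  simp only [kahlerNumerator, evalConj, map_sub, map_mul] at hp0 ⊢
  field_simp
  ring

theorem norm_conjCoord_const (s : Fin n ⊕ Fin n) {t : ℝ} (ht : 0 ≤ t) :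
    ‖conjCoord s (fun _ => (t : ℂ))‖ = t := by
  cases s <;> simp [conjCoord, abs_of_nonneg ht]

theorem tendsto_evalConj_div_sq_const {p q : MvPolynomial (Fin n ⊕ Fin n) ℂ} {d : ℕ} {c : ℝ}
    (hc : 0 < c) (hq : q.totalDegree ≤ 2 * d)
    (hp : ∀ t : ℝ, 1 ≤ t → c * t ^ (d + 1) ≤ ‖evalConj p (fun _ => (t : ℂ))‖) :
    Tendsto (fun t : ℝ => evalConj q (fun _ => (t : ℂ)) / evalConj p (fun _ => (t : ℂ)) ^ 2)
      atTop (𝓝 0) := by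
  set C := ∑ e ∈ q.support, ‖coeff e q‖
  have hbound : ∀ t : ℝ, 1 ≤ t →
      ‖evalConj q (fun _ => (t : ℂ)) / evalConj p (fun _ => (t : ℂ)) ^ 2‖ ≤ C / c ^ 2 / t ^ 2 := by
    intro t ht
    have ht0 : 0 < t := by linarith
    have hnum : ‖evalConj q (fun _ => (t : ℂ))‖ ≤ C * t ^ (2 * d) :=
      (norm_eval_le_mul_pow q ht fun s => (norm_conjCoord_const s ht0.le).le).trans
        (mul_le_mul_of_nonneg_left (pow_le_pow_right₀ ht hq) (by positivity))
    have hden : (c * t ^ (d + 1)) ^ 2 ≤ ‖evalConj p (fun _ => (t : ℂ))‖ ^ 2 :=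
      pow_le_pow_left₀ (by positivity) (hp t ht) 2
    have hcpos : 0 < (c * t ^ (d + 1)) ^ 2 := by positivity
    rw [norm_div, norm_pow, div_le_iff₀ (hcpos.trans_le hden)]
    calc _ ≤ C * t ^ (2 * d) := hnum
      _ = C / c ^ 2 / t ^ 2 * (c * t ^ (d + 1)) ^ 2 := by field_simp; ring
      _ ≤ _ := mul_le_mul_of_nonneg_left hden (by positivity)
  exact squeeze_zero_norm' (eventually_atTop.2 ⟨1, hbound⟩)
    (tendsto_const_nhds.div_atTop (tendsto_pow_atTop two_ne_zero))

end Wirtinger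

section Potential

variable {n N : ℕ} (a : Fin N → ℝ) (m : Fin N → Fin n → ℕ)

noncomputable def potentialPoly : MvPolynomial (Fin n ⊕ Fin n) ℂ :=
  1 + ∑ j, X (Sum.inl j) * X (Sum.inr j) +
    ∑ j, C (a j : ℂ) * ∏ i, (X (Sum.inl i) * X (Sum.inr i)) ^ m j i

theorem evalConj_potentialPoly (z : Fin n → ℂ) :
    evalConj (potentialPoly a m) z =
      ((1 + ∑ j, ‖z j‖ ^ 2 + ∑ j, a j * ∏ i, ‖z i‖ ^ (2 * m j i) : ℝ) : ℂ) := by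
  simp [evalConj, potentialPoly, conjCoord, mul_conj, normSq_eq_norm_sq, pow_mul]

theorem one_le_potential (ha : ∀ j, 0 < a j) (z : Fin n → ℂ) :
    1 ≤ 1 + ∑ j, ‖z j‖ ^ 2 + ∑ j, a j * ∏ i, ‖z i‖ ^ (2 * m j i) := by
  have : 0 ≤ ∑ j, a j * ∏ i, ‖z i‖ ^ (2 * m j i) :=
    Finset.sum_nonneg fun j _ => mul_nonneg (ha j).le (by positivity)
  have : 0 ≤ ∑ j, ‖z j‖ ^ 2 := by positivity
  linarith

theorem totalDegree_potentialPoly_le {M : ℕ} (hM : 1 ≤ M) (hm : ∀ j, ∑ i, m j i ≤ M) :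
    (potentialPoly a m).totalDegree ≤ 2 * M := by
  have hXX : ∀ i,
      (X (Sum.inl i) * X (Sum.inr i) : MvPolynomial (Fin n ⊕ Fin n) ℂ).totalDegree ≤ 2 :=
    fun i => (totalDegree_mul _ _).trans (by simp)
  refine (totalDegree_add _ _).trans
    (max_le ((totalDegree_add _ _).trans (max_le (by simp) ?_)) ?_)
  · exact totalDegree_finsetSum_le fun i _ => (hXX i).trans (by omega)
  · refine totalDegree_finsetSum_le fun j _ => (totalDegree_mul _ _).trans ?_
    rw [totalDegree_C, zero_add]
    refine (totalDegree_finsetProd _ _).trans ((Finset.sum_le_sum fun i _ =>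
      (totalDegree_pow _ _).trans (Nat.mul_le_mul_left (m j i) (hXX i))).trans ?_)
    rw [← Finset.sum_mul]
    have := hm j
    omega

/-- The index `none` carries the term `n t²` coming from `∑ |z_j|²`. -/
theorem evalConj_potentialPoly_const {t : ℝ} (ht : 0 ≤ t) :
    evalConj (potentialPoly a m) (fun _ => (t : ℂ)) =
      ((1 + ∑ o : Option (Fin N), o.elim (n : ℝ) a * t ^ (2 * o.elim 1 fun j => ∑ i, m j i) :
        ℝ) : ℂ) := by
  simp [evalConj_potentialPoly, abs_of_nonneg ht, Finset.prod_pow_eq_pow_sum, Finset.mul_sum,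
    add_assoc]

theorem exists_pow_le_norm_evalConj_potentialPoly (hn : 0 < n) (ha : ∀ j, 0 < a j) :
    ∃ M : ℕ, ∃ c : ℝ, 1 ≤ M ∧ (∀ j, ∑ i, m j i ≤ M) ∧ 0 < c ∧
      ∀ t : ℝ, 1 ≤ t → c * t ^ (2 * M) ≤ ‖evalConj (potentialPoly a m) (fun _ => (t : ℂ))‖ := by
  set w : Option (Fin N) → ℕ := fun o => o.elim 1 fun j => ∑ i, m j i
  obtain ⟨o₀, -, ho₀⟩ := Finset.exists_max_image Finset.univ w Finset.univ_nonempty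
  refine ⟨w o₀, o₀.elim (n : ℝ) a, ho₀ none (Finset.mem_univ _),
    fun j => ho₀ (some j) (Finset.mem_univ _), ?_, fun t ht => ?_⟩
  · cases o₀ with
    | none => show (0 : ℝ) < n; exact_mod_cast hn
    | some j => exact ha j
  have hterm : ∀ o : Option (Fin N), 0 ≤ o.elim (n : ℝ) a * t ^ (2 * w o) := fun o => by
    cases o with
    | none => simp; positivity
    | some j => exact mul_nonneg (ha j).le (by positivity)
  rw [evalConj_potentialPoly_const a m (by linarith), Complex.norm_real, Real.norm_eq_abs]
  refine le_trans ?_ (le_abs_self _)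
  have := Finset.single_le_sum (fun o _ => hterm o) (Finset.mem_univ o₀)
  linarith

end Potential

theorem one_le_norm_of_mul_zpow_eq_one {x : ℂ} {r : ℝ} {q : ℤ} (h : x * (r : ℂ) ^ q = 1)
    (hr : 1 ≤ r) (hq : q ≤ 0) : 1 ≤ ‖x‖ := by
  have hnorm : ‖x‖ * r ^ q = 1 := by
    simpa [abs_of_nonneg (zero_le_one.trans hr)] using congrArg norm h
  have hpos : 0 < r ^ q := zpow_pos (by linarith) q
  have hle : r ^ q ≤ 1 := zpow_le_one_of_nonpos₀ hr hq
  nlinarith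

theorem stmt2_general (n N : ℕ) (hn : 0 < n) (a : Fin N → ℝ) (m : Fin N → (Fin n → ℕ))
    (ha : ∀ j, 0 < a j)
    (P : (Fin n → ℂ) → ℝ)
    (hP : ∀ z, P z = 1 + ∑ j, ‖z j‖ ^ 2 + ∑ j, a j * ∏ i, ‖z i‖ ^ (2 * m j i))
    (Φ : (Fin n → ℂ) → ℝ) (hΦ : ∀ z, Φ z = Real.log (P z))
    (q : ℤ) (lam : ℝ) (hlam : lam = 2 * q)
    (heq : ∀ z, (kahlerMatrix Φ z).det * (P z : ℂ) ^ q = 1) :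
    0 < lam := by
  have hPp : ∀ z, evalConj (potentialPoly a m) z = P z := fun z => by
    rw [evalConj_potentialPoly, hP]
  have hP1 : ∀ z, 1 ≤ P z := fun z => hP z ▸ one_le_potential a m ha z
  have hmat := kahlerMatrix_apply_of_eq_log (Φ := Φ) (p := potentialPoly a m)
    (fun w => by rw [hPp]; exact ofReal_mem_slitPlane.2 (by linarith [hP1 w]))
    (fun w => by rw [hΦ, hPp, ofReal_log (by linarith [hP1 w])])
  obtain ⟨M, c, hM1, hMm, hc, hlow⟩ := exists_pow_le_norm_evalConj_potentialPoly a m hn ha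
  obtain ⟨k, hk⟩ : ∃ k, 2 * M = k + 2 := ⟨2 * M - 2, by omega⟩
  have : Nonempty (Fin n) := ⟨⟨0, hn⟩⟩
  have hdet : Tendsto (fun t : ℝ => (kahlerMatrix Φ (fun _ => (t : ℂ))).det) atTop (𝓝 0) :=
    Matrix.tendsto_det_zero fun α β => by
      simp only [hmat]
      exact tendsto_evalConj_div_sq_const hc
        (totalDegree_kahlerNumerator_le (hk ▸ totalDegree_potentialPoly_le a m hM1 hMm) α β)
        (hk ▸ hlow)
  by_contra hlam0
  have hq : q ≤ 0 := by exact_mod_cast (by linarith : (q : ℝ) ≤ 0)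
  obtain ⟨t, ht⟩ := (hdet.norm.eventually (gt_mem_nhds (by simp : ‖(0 : ℂ)‖ < 1))).exists
  exact (one_le_norm_of_mul_zpow_eq_one (heq _) (hP1 _) hq).not_gt (by simpa using ht)

/-- If `Φ = log P`, `P = 1 + Σ|z_j|² + Σ a_j |z^{m_j}|²` with `a_j > 0`, and the
metric `g_{αβ̄} = ∂²Φ/∂z_α∂z̄_β` satisfies `det g · P^{λ/2} ≡ 1` with `q = λ/2 ∈ ℤ`,
then `λ > 0`, i.e. `q > 0`. -/
theorem stmt2 (n N : ℕ) (hn : 0 < n) (a : Fin N → ℝ) (m : Fin N → (Fin n → ℕ))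
    (ha : ∀ j, 0 < a j) (hm : Function.Injective m) (hdeg : ∀ j, 2 ≤ ∑ i, m j i)
    (P : (Fin n → ℂ) → ℝ)
    (hP : ∀ z, P z = 1 + ∑ j, ‖z j‖ ^ 2 + ∑ j, a j * ∏ i, ‖z i‖ ^ (2 * m j i))
    (Φ : (Fin n → ℂ) → ℝ) (hΦ : ∀ z, Φ z = Real.log (P z))
    (q : ℤ) (lam : ℝ) (hlam : lam = 2 * q)
    (heq : ∀ z, (kahlerMatrix Φ z).det * (P z : ℂ) ^ q = 1) :
    0 < lam :=
  stmt2_general n N hn a m ha P hP Φ hΦ q lam hlam heq
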